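/- Let 1 ≤ p < ∞ and r > 0. There exists a constant C > 0 such that for every sequence (a_n)_{n≥1} of nonnegative reals, ( Σ_{n=1}^∞ ( Σ_{j=1}^n a_j )^p n^{-r-1} )^{1/p} ≤ C ( Σ_{n=1}^∞ (n a_n)^p n^{-r-1} )^{1/p}. -/

import Mathlib

/-!
Hölder's inequality with the weights `δ j^(δ-1)`, whose partial sums up to `N` are at most `N^δ`
(telescoping against `j^δ`, by concavity), gives
`(∑_{j ≤ N} a_j)^p ≤ δ^(1-p) N^(δ(p-1)) ∑_{j ≤ N} j^((1-δ)(p-1)) a_j^p`.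
After multiplying by `N^(-r-1)` and exchanging the two sums, each `a_j^p` is weighted by the tail
`∑_{N ≥ j} N^(-u)` with `u = r + 1 - δ(p-1)`. Choosing `δ` with `δ(p-1) < r` makes `u > 1`, and
telescoping against `N^(1-u)` bounds the tail by `2^u/(u-1) j^(1-u)`, which is exactly the weight
`j^(p-r-1) / j^((1-δ)(p-1))` needed on the right-hand side.
-/

open Finset
open scoped ENNReal

lemma mul_rpow_sub_one_le_rpow_sub_rpow_sub_one {δ x : ℝ} (hδ0 : 0 ≤ δ) (hδ1 : δ ≤ 1)
    (hx : 1 ≤ x) : δ * x ^ (δ - 1) ≤ x ^ δ - (x - 1) ^ δ := by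
  have hx0 : 0 < x := by linarith
  have hbernoulli : (1 + -x⁻¹) ^ δ ≤ 1 + δ * -x⁻¹ :=
    rpow_one_add_le_one_add_mul_self (by linarith [inv_le_one_of_one_le₀ hx]) hδ0 hδ1
  calc δ * x ^ (δ - 1) = x ^ δ - x ^ δ * (1 + δ * -x⁻¹) := by
        rw [Real.rpow_sub_one hx0.ne']; ring
    _ ≤ x ^ δ - x ^ δ * (1 + -x⁻¹) ^ δ := by gcongr
    _ = x ^ δ - (x - 1) ^ δ := by
        rw [← Real.mul_rpow hx0.le (by linarith [inv_le_one_of_one_le₀ hx])]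
        congr 2
        field_simp
        ring

lemma sum_range_mul_rpow_sub_one_le {δ : ℝ} (hδ0 : 0 < δ) (hδ1 : δ ≤ 1) (N : ℕ) :
    ∑ i ∈ range N, δ * ((i : ℝ) + 1) ^ (δ - 1) ≤ (N : ℝ) ^ δ :=
  calc ∑ i ∈ range N, δ * ((i : ℝ) + 1) ^ (δ - 1)
      ≤ ∑ i ∈ range N, (((i + 1 : ℕ) : ℝ) ^ δ - (i : ℝ) ^ δ) := sum_le_sum fun i _ => by
        simpa using mul_rpow_sub_one_le_rpow_sub_rpow_sub_one hδ0.le hδ1 (x := i + 1) (by simp)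
    _ = (N : ℝ) ^ δ := by
        rw [sum_range_sub (fun i : ℕ => (i : ℝ) ^ δ)]
        simp [Real.zero_rpow hδ0.ne']

lemma mul_rpow_neg_le_rpow_sub_rpow {u x : ℝ} (hu : 1 ≤ u) (hx : 0 < x) :
    (u - 1) * (x + 1) ^ (-u) ≤ x ^ (1 - u) - (x + 1) ^ (1 - u) := by
  have hx1 : 0 < x + 1 := by linarith
  have hbernoulli : 1 + u * x⁻¹ ≤ (1 + x⁻¹) ^ u :=
    one_add_mul_self_le_rpow_one_add (by linarith [inv_pos.2 hx]) hu
  have hkey : x + u ≤ (x + 1) ^ u * x ^ (1 - u) := by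
    have h : (x + 1) ^ u * x ^ (1 - u) = x * (1 + x⁻¹) ^ u := by
      rw [show 1 + x⁻¹ = (x + 1) / x by field_simp, Real.div_rpow hx1.le hx.le,
        Real.rpow_sub hx, Real.rpow_one]
      field_simp
    rw [h]
    calc x + u = x * (1 + u * x⁻¹) := by field_simp
      _ ≤ x * (1 + x⁻¹) ^ u := by gcongr
  have hneg : (x + 1) ^ (-u) * (x + 1) ^ u = 1 := by
    rw [← Real.rpow_add hx1]; simp
  calc (u - 1) * (x + 1) ^ (-u) = (x + u) * (x + 1) ^ (-u) - (x + 1) ^ (1 - u) := by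
        rw [sub_eq_add_neg 1 u, Real.rpow_add hx1, Real.rpow_one]; ring
    _ ≤ (x + 1) ^ u * x ^ (1 - u) * (x + 1) ^ (-u) - (x + 1) ^ (1 - u) := by gcongr
    _ = x ^ (1 - u) - (x + 1) ^ (1 - u) := by rw [mul_comm, ← mul_assoc, hneg, one_mul]

lemma rpow_neg_le_mul_rpow_sub_rpow {u x : ℝ} (hu : 1 < u) (hx : 1 ≤ x) :
    x ^ (-u) ≤ 2 ^ u / (u - 1) * (x ^ (1 - u) - (x + 1) ^ (1 - u)) := by
  have hx0 : 0 < x := by linarith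
  have hu1 : 0 < u - 1 := by linarith
  calc x ^ (-u) = 2 ^ u * (2 * x) ^ (-u) := by
        rw [Real.mul_rpow zero_le_two hx0.le, ← mul_assoc, ← Real.rpow_add two_pos,
          add_neg_cancel, Real.rpow_zero, one_mul]
    _ ≤ 2 ^ u * (x + 1) ^ (-u) := by
        gcongr 2 ^ u * ?_
        exact Real.rpow_le_rpow_of_nonpos (by linarith) (by linarith) (by linarith)
    _ = 2 ^ u / (u - 1) * ((u - 1) * (x + 1) ^ (-u)) := by field_simp
    _ ≤ 2 ^ u / (u - 1) * (x ^ (1 - u) - (x + 1) ^ (1 - u)) := by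
        gcongr
        exact mul_rpow_neg_le_rpow_sub_rpow hu.le hx0

lemma ENNReal.ofReal_rpow_mul_ofReal_rpow {t : ℝ} (ht : 0 < t) (a b : ℝ) :
    ENNReal.ofReal (t ^ a) * ENNReal.ofReal (t ^ b) = ENNReal.ofReal (t ^ (a + b)) := by
  rw [← ENNReal.ofReal_mul (by positivity), Real.rpow_add ht]

lemma ENNReal.tsum_sum_range_succ_eq_tsum_tsum (f : ℕ → ℕ → ℝ≥0∞) :
    ∑' n, ∑ i ∈ range (n + 1), f i n = ∑' i, ∑' k, f i (i + k) := by
  rw [tsum_congr fun n => sum_eq_tsum_indicator (fun i => f i n) (range (n + 1)),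
    ENNReal.tsum_comm]
  refine tsum_congr fun i => ?_
  rw [← (add_right_injective i).tsum_eq]
  · refine tsum_congr fun k => ?_
    simp [Set.indicator]
  · intro n hn
    obtain ⟨hin, -⟩ : i ≤ n ∧ f i n ≠ 0 := by simpa [Set.indicator] using hn
    exact ⟨n - i, by simp [hin]⟩

lemma ENNReal.rpow_sum_le_rpow_sum_weight_mul {ι : Type*} (s : Finset ι) {p : ℝ} (hp : 1 ≤ p)
    (w f : ι → ℝ≥0∞) (hw0 : ∀ i ∈ s, w i ≠ 0) (hwt : ∀ i ∈ s, w i ≠ ∞) :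
    (∑ i ∈ s, f i) ^ p ≤ (∑ i ∈ s, w i) ^ (p - 1) * ∑ i ∈ s, w i ^ (1 - p) * f i ^ p := by
  have hp0 : 0 < p := by linarith
  have hholder := ENNReal.inner_le_weight_mul_Lp_of_nonneg s hp w fun i => f i / w i
  rw [sum_congr rfl fun i hi => ENNReal.mul_div_cancel (hw0 i hi) (hwt i hi)] at hholder
  have hweight : ∀ i ∈ s, w i * (f i / w i) ^ p = w i ^ (1 - p) * f i ^ p := fun i hi => by
    rw [ENNReal.div_rpow_of_nonneg _ _ hp0.le, ENNReal.rpow_sub _ _ (hw0 i hi) (hwt i hi),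
      ENNReal.rpow_one]
    simp only [div_eq_mul_inv]
    ring
  rw [sum_congr rfl hweight] at hholder
  calc (∑ i ∈ s, f i) ^ p
      ≤ ((∑ i ∈ s, w i) ^ (1 - p⁻¹) * (∑ i ∈ s, w i ^ (1 - p) * f i ^ p) ^ p⁻¹) ^ p := by
        gcongr
    _ = (∑ i ∈ s, w i) ^ (p - 1) * ∑ i ∈ s, w i ^ (1 - p) * f i ^ p := by
        rw [ENNReal.mul_rpow_of_nonneg _ _ hp0.le, ← ENNReal.rpow_mul, ← ENNReal.rpow_mul,
          inv_mul_cancel₀ hp0.ne', ENNReal.rpow_one, sub_mul, one_mul, inv_mul_cancel₀ hp0.ne']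

lemma tsum_ofReal_rpow_neg_le {u : ℝ} (hu : 1 < u) (i : ℕ) :
    ∑' k : ℕ, ENNReal.ofReal ((((i + k : ℕ) : ℝ) + 1) ^ (-u))
      ≤ ENNReal.ofReal (2 ^ u / (u - 1) * ((i : ℝ) + 1) ^ (1 - u)) := by
  set g : ℕ → ℝ := fun m => 2 ^ u / (u - 1) * ((m : ℝ) + 1) ^ (1 - u) with hg
  refine ENNReal.tsum_le_of_sum_range_le fun n => ?_
  rw [← ENNReal.ofReal_sum_of_nonneg fun k _ => by positivity]
  refine ENNReal.ofReal_le_ofReal ?_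
  calc ∑ k ∈ range n, (((i + k : ℕ) : ℝ) + 1) ^ (-u)
      ≤ ∑ k ∈ range n, (g (i + k) - g (i + (k + 1))) := sum_le_sum fun k _ => by
        simp only [hg, ← mul_sub]
        push_cast
        rw [show (i : ℝ) + (k + 1) + 1 = (i + k + 1) + 1 by ring]
        exact rpow_neg_le_mul_rpow_sub_rpow hu (by linarith [(i + k : ℕ).cast_nonneg (α := ℝ)])
    _ = g i - g (i + n) := sum_range_sub' (fun k => g (i + k)) n
    _ ≤ g i := by
        simp only [sub_le_self_iff, hg]
        have : 0 < u - 1 := by linarith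
        positivity

lemma rpow_sum_range_le {p δ : ℝ} (hp : 1 ≤ p) (hδ0 : 0 < δ) (hδ1 : δ ≤ 1) (N : ℕ)
    (x : ℕ → ℝ≥0∞) :
    (∑ i ∈ range N, x i) ^ p ≤ ENNReal.ofReal (δ ^ (1 - p) * (N : ℝ) ^ (δ * (p - 1))) *
      ∑ i ∈ range N, ENNReal.ofReal (((i : ℝ) + 1) ^ ((1 - δ) * (p - 1))) * x i ^ p := by
  set v : ℕ → ℝ≥0∞ := fun i => ENNReal.ofReal (δ * ((i : ℝ) + 1) ^ (δ - 1)) with hv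
  have hv0 : ∀ i ∈ range N, v i ≠ 0 := fun i _ => by
    simp only [hv, ne_eq, ENNReal.ofReal_eq_zero, not_le]
    positivity
  have hsum : ∑ i ∈ range N, v i ≤ ENNReal.ofReal ((N : ℝ) ^ δ) := by
    rw [← ENNReal.ofReal_sum_of_nonneg fun i _ => by positivity]
    exact ENNReal.ofReal_le_ofReal (sum_range_mul_rpow_sub_one_le hδ0 hδ1 N)
  have hpow : ∀ i, v i ^ (1 - p) =
      ENNReal.ofReal (δ ^ (1 - p)) * ENNReal.ofReal (((i : ℝ) + 1) ^ ((1 - δ) * (p - 1))) := by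
    intro i
    rw [ENNReal.ofReal_rpow_of_pos (by positivity), Real.mul_rpow hδ0.le (by positivity),
      ← Real.rpow_mul (by positivity), ENNReal.ofReal_mul (by positivity)]
    ring_nf
  calc (∑ i ∈ range N, x i) ^ p
      ≤ (∑ i ∈ range N, v i) ^ (p - 1) * ∑ i ∈ range N, v i ^ (1 - p) * x i ^ p :=
        ENNReal.rpow_sum_le_rpow_sum_weight_mul _ hp v x hv0 fun _ _ => ENNReal.ofReal_ne_top
    _ ≤ ENNReal.ofReal ((N : ℝ) ^ δ) ^ (p - 1) * ∑ i ∈ range N, v i ^ (1 - p) * x i ^ p := by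
        gcongr
    _ = _ := by
        rw [ENNReal.ofReal_rpow_of_nonneg (by positivity) (by linarith),
          ← Real.rpow_mul (by positivity), ENNReal.ofReal_mul (by positivity)]
        simp_rw [hpow, mul_sum]
        exact sum_congr rfl fun i _ => by ring

lemma tsum_rpow_sum_range_mul_rpow_le {p r δ u : ℝ} (hp : 1 ≤ p) (hδ0 : 0 < δ) (hδ1 : δ ≤ 1)
    (hu : 1 < u) (hru : r + 1 = u + δ * (p - 1)) (x : ℕ → ℝ≥0∞) :
    ∑' n : ℕ, (∑ i ∈ range (n + 1), x i) ^ p * ENNReal.ofReal (((n : ℝ) + 1) ^ (-r - 1))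
      ≤ ENNReal.ofReal (δ ^ (1 - p) * (2 ^ u / (u - 1))) *
        ∑' n : ℕ, x n ^ p * ENNReal.ofReal (((n : ℝ) + 1) ^ (p - r - 1)) := by
  set G : ℕ → ℝ≥0∞ := fun i => ENNReal.ofReal (((i : ℝ) + 1) ^ ((1 - δ) * (p - 1))) * x i ^ p
  have hrow : ∀ n : ℕ, (∑ i ∈ range (n + 1), x i) ^ p * ENNReal.ofReal (((n : ℝ) + 1) ^ (-r - 1))
      ≤ ENNReal.ofReal (δ ^ (1 - p)) *
        ∑ i ∈ range (n + 1), ENNReal.ofReal (((n : ℝ) + 1) ^ (-u)) * G i := fun n => by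
    calc _ ≤ ENNReal.ofReal (δ ^ (1 - p) * ((n + 1 : ℕ) : ℝ) ^ (δ * (p - 1))) *
          (∑ i ∈ range (n + 1), G i) * ENNReal.ofReal (((n : ℝ) + 1) ^ (-r - 1)) := by
          gcongr
          exact rpow_sum_range_le hp hδ0 hδ1 (n + 1) x
      _ = _ := by
          have hexp : ENNReal.ofReal (((n : ℝ) + 1) ^ (δ * (p - 1))) *
              ENNReal.ofReal (((n : ℝ) + 1) ^ (-r - 1)) = ENNReal.ofReal (((n : ℝ) + 1) ^ (-u)) := by
            rw [ENNReal.ofReal_rpow_mul_ofReal_rpow (by positivity)]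
            congr 2
            linarith
          rw [ENNReal.ofReal_mul (by positivity), ← mul_sum, Nat.cast_succ, ← hexp]
          ring
  have htail : ∀ i, (∑' k : ℕ, ENNReal.ofReal ((((i + k : ℕ) : ℝ) + 1) ^ (-u))) * G i ≤
      ENNReal.ofReal (2 ^ u / (u - 1)) * (x i ^ p * ENNReal.ofReal (((i : ℝ) + 1) ^ (p - r - 1))) :=
    fun i => by
    calc _ ≤ ENNReal.ofReal (2 ^ u / (u - 1) * ((i : ℝ) + 1) ^ (1 - u)) * G i := by
          gcongr
          exact tsum_ofReal_rpow_neg_le hu i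
      _ = _ := by
          have hexp : ENNReal.ofReal (((i : ℝ) + 1) ^ (1 - u)) *
              ENNReal.ofReal (((i : ℝ) + 1) ^ ((1 - δ) * (p - 1))) =
              ENNReal.ofReal (((i : ℝ) + 1) ^ (p - r - 1)) := by
            rw [ENNReal.ofReal_rpow_mul_ofReal_rpow (by positivity)]
            congr 2
            linarith
          have hu1 : 0 < u - 1 := by linarith
          rw [ENNReal.ofReal_mul (by positivity), ← hexp]
          ring
  calc _ ≤ ∑' n : ℕ, ENNReal.ofReal (δ ^ (1 - p)) *
        ∑ i ∈ range (n + 1), ENNReal.ofReal (((n : ℝ) + 1) ^ (-u)) * G i :=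
        ENNReal.tsum_le_tsum hrow
    _ = ENNReal.ofReal (δ ^ (1 - p)) *
        ∑' i, (∑' k : ℕ, ENNReal.ofReal ((((i + k : ℕ) : ℝ) + 1) ^ (-u))) * G i := by
        rw [ENNReal.tsum_mul_left, ENNReal.tsum_sum_range_succ_eq_tsum_tsum
          (fun i n => ENNReal.ofReal (((n : ℝ) + 1) ^ (-u)) * G i)]
        simp_rw [ENNReal.tsum_mul_right]
    _ ≤ ENNReal.ofReal (δ ^ (1 - p)) * ∑' i, ENNReal.ofReal (2 ^ u / (u - 1)) *
        (x i ^ p * ENNReal.ofReal (((i : ℝ) + 1) ^ (p - r - 1))) := by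
        gcongr _ * ?_
        exact ENNReal.tsum_le_tsum htail
    _ = _ := by
        rw [ENNReal.tsum_mul_left, ← mul_assoc, ENNReal.ofReal_mul (by positivity)]

lemma tsum_rpow_sum_Icc_mul_rpow_le {p r δ u : ℝ} (hp : 1 ≤ p) (hδ0 : 0 < δ) (hδ1 : δ ≤ 1)
    (hu : 1 < u) (hru : r + 1 = u + δ * (p - 1)) (a : ℕ → ℝ) :
    ∑' n : ℕ, (∑ j ∈ Icc 1 (n + 1), ENNReal.ofReal (a j)) ^ p *
        ENNReal.ofReal (((n : ℝ) + 1) ^ (-r - 1))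
      ≤ ENNReal.ofReal (δ ^ (1 - p) * (2 ^ u / (u - 1))) *
        ∑' n : ℕ, ENNReal.ofReal (((n : ℝ) + 1) * a (n + 1)) ^ p *
          ENNReal.ofReal (((n : ℝ) + 1) ^ (-r - 1)) := by
  have hsum : ∀ n : ℕ, ∑ j ∈ Icc 1 (n + 1), ENNReal.ofReal (a j) =
      ∑ i ∈ range (n + 1), ENNReal.ofReal (a (i + 1)) := fun n => by
    rw [range_eq_Ico, sum_Ico_add' (fun j => ENNReal.ofReal (a j)), Ico_add_one_right_eq_Icc]
  have hweight : ∀ n : ℕ, ENNReal.ofReal (a (n + 1)) ^ p *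
      ENNReal.ofReal (((n : ℝ) + 1) ^ (p - r - 1)) =
      ENNReal.ofReal (((n : ℝ) + 1) * a (n + 1)) ^ p *
        ENNReal.ofReal (((n : ℝ) + 1) ^ (-r - 1)) := fun n => by
    have hexp : ENNReal.ofReal (((n : ℝ) + 1) ^ p) * ENNReal.ofReal (((n : ℝ) + 1) ^ (-r - 1)) =
        ENNReal.ofReal (((n : ℝ) + 1) ^ (p - r - 1)) := by
      rw [ENNReal.ofReal_rpow_mul_ofReal_rpow (by positivity)]
      ring_nf
    rw [← hexp, ← ENNReal.ofReal_rpow_of_pos (x := (n : ℝ) + 1) (by positivity),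
      ENNReal.ofReal_mul (by positivity), ENNReal.mul_rpow_of_nonneg _ _ (by linarith)]
    ring
  simp_rw [hsum, ← hweight]
  exact tsum_rpow_sum_range_mul_rpow_le hp hδ0 hδ1 hu hru fun i => ENNReal.ofReal (a (i + 1))

theorem stmt3 (p r : ℝ) (hp : 1 ≤ p) (hr : 0 < r) :
    ∃ C : ℝ, 0 < C ∧ ∀ a : ℕ → ℝ, (∀ n, 0 ≤ a n) →
      (∑' n : ℕ, (∑ j ∈ Finset.Icc 1 (n + 1), ENNReal.ofReal (a j)) ^ p *
          ENNReal.ofReal (((n : ℝ) + 1) ^ (-r - 1))) ^ (1/p)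
        ≤ ENNReal.ofReal C *
          (∑' n : ℕ, ENNReal.ofReal (((n : ℝ) + 1) * a (n + 1)) ^ p *
            ENNReal.ofReal (((n : ℝ) + 1) ^ (-r - 1))) ^ (1/p) := by
  set δ := r / (r + p) with hδ
  have hδr : δ * (p - 1) < r := by
    rw [hδ, div_mul_eq_mul_div, div_lt_iff₀ (by positivity)]
    nlinarith
  set u := r + 1 - δ * (p - 1)
  have hu1 : 0 < u - 1 := by linarith
  have hC : 0 < δ ^ (1 - p) * (2 ^ u / (u - 1)) := by positivity
  refine ⟨(δ ^ (1 - p) * (2 ^ u / (u - 1))) ^ (1 / p), by positivity, fun a _ => ?_⟩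
  calc _ ≤ (ENNReal.ofReal (δ ^ (1 - p) * (2 ^ u / (u - 1))) * _) ^ (1 / p) := by
        gcongr
        exact tsum_rpow_sum_Icc_mul_rpow_le hp (by positivity)
          (div_le_one_of_le₀ (by linarith) (by positivity)) (by linarith) (by ring) a
    _ = _ := by
        rw [ENNReal.mul_rpow_of_nonneg _ _ (by positivity), ENNReal.ofReal_rpow_of_pos hC]
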